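/- The n-vertex Jones graph J_i (where n = 3i + 2) has independence number (n+1)/3, hence fractional chromatic number at least n/α(J_i) = 3 − 3/(n+1). -/
import Mathlib


/-- Vertices of the (union of all) Jones graphs: `a i`, `b i`, `c i` for `i ≥ 1`,
together with the vertices `d` and `e` of the initial 5-cycle `(a 1, b 1, c 1, d, e)`. -/
inductive JV where
  | a (i : ℕ)
  | b (i : ℕ)
  | c (i : ℕ)
  | d
  | e
deriving DecidableEq

/-- The arcs generating the Jones graphs: `J₁` is the 5-cycle `(a 1, b 1, c 1, d, e)`
and `J_{i+1}` adds `a_{i+1}, b_{i+1}, c_{i+1}` with `N(a_{i+1}) = {b i, b (i+1)}`,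
`N(b_{i+1}) = {a_{i+1}, c_{i+1}}`, `N(c_{i+1}) = {a i, c i, b_{i+1}}`. -/
def JonesArc : JV → JV → Prop
  | .a i, .b j => 1 ≤ i ∧ j = i
  | .c i, .b j => 1 ≤ i ∧ j = i
  | .a i, .c j => 1 ≤ i ∧ j = i + 1
  | .c i, .c j => 1 ≤ i ∧ j = i + 1
  | .b i, .a j => 1 ≤ i ∧ j = i + 1
  | .e, .d => True
  | .e, .a j => j = 1
  | .d, .c j => j = 1
  | _, _ => False

/-- The (union of the) Jones graphs. -/
def JonesGraph : SimpleGraph JV := SimpleGraph.fromRel JonesArc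

/-- The vertex set of the Jones graph `J i`:
`{a k, b k, c k : 1 ≤ k ≤ i} ∪ {d, e}`, of size `3i + 2`. -/
def JonesVerts (i : ℕ) : Set JV :=
  {x | match x with
    | .a k => 1 ≤ k ∧ k ≤ i
    | .b k => 1 ≤ k ∧ k ≤ i
    | .c k => 1 ≤ k ∧ k ≤ i
    | .d => True
    | .e => True}

open Finset in
/-- Blocks of vertices. -/
def Blk : ℕ → Finset JV
  | 0 => {JV.d, JV.e}
  | (k+1) => {JV.a (k+1), JV.b (k+1), JV.c (k+1)}

lemma blk_disjoint {j k : ℕ} (h : j ≠ k) : Disjoint (Blk j) (Blk k) := by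
  rw [Finset.disjoint_left]
  intro x hx hx'
  match j, k with
  | 0, 0 => exact h rfl
  | 0, k+1 => simp [Blk] at hx hx'; rcases hx with rfl|rfl <;> simp at hx'
  | j+1, 0 => simp [Blk] at hx hx'; rcases hx' with rfl|rfl <;> simp at hx
  | j+1, k+1 =>
    simp [Blk] at hx hx'
    rcases hx with rfl|rfl|rfl <;> rcases hx' with h'|h'|h' <;>
      simp_all

lemma blk_card : ∀ k, (Blk k).card = if k = 0 then 2 else 3
  | 0 => by simp [Blk]
  | (k+1) => by simp [Blk]

def FV (i : ℕ) : Finset JV := (Finset.range (i+1)).biUnion Blk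

lemma jonesVerts_eq (i : ℕ) : JonesVerts i = ↑(FV i) := by
  ext x
  cases x <;>
    simp only [JonesVerts, FV, Set.mem_setOf_eq, Finset.coe_biUnion, Set.mem_iUnion,
      Finset.mem_coe, Finset.mem_range]
  case a n =>
    constructor
    · rintro ⟨h1, h2⟩; exact ⟨n, by omega, by cases n with | zero => omega | succ m => simp [Blk]⟩
    · rintro ⟨k, hk, hmem⟩
      match k with
      | 0 => simp [Blk] at hmem
      | k+1 => simp [Blk] at hmem; subst hmem; omega
  case b n =>
    constructor
    · rintro ⟨h1, h2⟩; exact ⟨n, by omega, by cases n with | zero => omega | succ m => simp [Blk]⟩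
    · rintro ⟨k, hk, hmem⟩
      match k with
      | 0 => simp [Blk] at hmem
      | k+1 => simp [Blk] at hmem; subst hmem; omega
  case c n =>
    constructor
    · rintro ⟨h1, h2⟩; exact ⟨n, by omega, by cases n with | zero => omega | succ m => simp [Blk]⟩
    · rintro ⟨k, hk, hmem⟩
      match k with
      | 0 => simp [Blk] at hmem
      | k+1 => simp [Blk] at hmem; subst hmem; omega
  case d =>
    simp only [true_iff]
    exact ⟨0, by omega, by simp [Blk]⟩
  case e =>
    simp only [true_iff]
    exact ⟨0, by omega, by simp [Blk]⟩

lemma fv_card (i : ℕ) : (FV i).card = 3 * i + 2 := by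
  rw [FV, Finset.card_biUnion (fun j _ k _ h => blk_disjoint h)]
  rw [Finset.sum_range_succ']
  simp only [blk_card]
  simp [Finset.sum_ite_eq]
  omega

lemma sum_bound (s : ℕ → ℕ) (h0 : s 0 ≤ 1) (h2 : ∀ k, s (k+1) ≤ 2)
    (hfull : ∀ k, s (k+1) = 2 → s k = 0) :
    ∀ i, ∑ k ∈ Finset.range (i+1), s k ≤ i + 1 := by
  intro i
  induction i using Nat.strong_induction_on with
  | _ i ih =>
    match i with
    | 0 => simpa using h0
    | 1 =>
      have p1 := h2 0; have p2 := hfull 0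
      rw [Finset.sum_range_succ, Finset.sum_range_one]
      simp only [Nat.zero_add] at p1 p2
      omega
    | (j+2) =>
      by_cases hl : s (j+2) = 2
      · have h1 : s (j+1) = 0 := hfull _ hl
        have := ih j (by omega)
        rw [Finset.sum_range_succ, Finset.sum_range_succ]
        omega
      · have p1 := h2 (j+1)
        have p2 := ih (j+1) (by omega)
        rw [Finset.sum_range_succ]
        simp only [show j+1+1=j+2 from rfl] at p1 p2
        omega

lemma jadj (x y : JV) : JonesGraph.Adj x y ↔ x ≠ y ∧ (JonesArc x y ∨ JonesArc y x) :=
  SimpleGraph.fromRel_adj _ _ _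

lemma adj_ab (k : ℕ) : JonesGraph.Adj (JV.a (k+1)) (JV.b (k+1)) :=
  (jadj _ _).mpr ⟨fun h => JV.noConfusion h, Or.inl ⟨by omega, rfl⟩⟩
lemma adj_cb (k : ℕ) : JonesGraph.Adj (JV.c (k+1)) (JV.b (k+1)) :=
  (jadj _ _).mpr ⟨fun h => JV.noConfusion h, Or.inl ⟨by omega, rfl⟩⟩
lemma adj_ac (k : ℕ) : JonesGraph.Adj (JV.a (k+1)) (JV.c (k+2)) :=
  (jadj _ _).mpr ⟨fun h => JV.noConfusion h, Or.inl ⟨by omega, rfl⟩⟩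
lemma adj_cc (k : ℕ) : JonesGraph.Adj (JV.c (k+1)) (JV.c (k+2)) :=
  (jadj _ _).mpr ⟨by intro h; rw [JV.c.injEq] at h; omega, Or.inl ⟨by omega, rfl⟩⟩
lemma adj_ba (k : ℕ) : JonesGraph.Adj (JV.b (k+1)) (JV.a (k+2)) :=
  (jadj _ _).mpr ⟨fun h => JV.noConfusion h, Or.inl ⟨by omega, rfl⟩⟩
lemma adj_ed : JonesGraph.Adj JV.e JV.d :=
  (jadj _ _).mpr ⟨fun h => JV.noConfusion h, Or.inl trivial⟩
lemma adj_ea : JonesGraph.Adj JV.e (JV.a 1) :=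
  (jadj _ _).mpr ⟨fun h => JV.noConfusion h, Or.inl rfl⟩
lemma adj_dc : JonesGraph.Adj JV.d (JV.c 1) :=
  (jadj _ _).mpr ⟨fun h => JV.noConfusion h, Or.inl rfl⟩

/-- The `n`-vertex Jones graph `J i` (where `n = 3i + 2`) has independence number
`(n + 1)/3 = i + 1`; hence its fractional chromatic number is at least
`n / α(J i) = 3 - 3/(n+1)`. -/
theorem stmt19 (i : ℕ) (hi : 1 ≤ i) :
    (JonesVerts i).ncard = 3 * i + 2 ∧
    (∃ t ⊆ JonesVerts i,
      (∀ x ∈ t, ∀ y ∈ t, ¬ JonesGraph.Adj x y) ∧ t.ncard = i + 1) ∧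
    (∀ t ⊆ JonesVerts i,
      (∀ x ∈ t, ∀ y ∈ t, ¬ JonesGraph.Adj x y) → t.ncard ≤ i + 1) ∧
    ((3 * i + 2 : ℝ) / (i + 1) = 3 - 3 / ((3 * i + 2) + 1)) := by
  refine ⟨?_, ?_, ?_, ?_⟩
  · rw [jonesVerts_eq, Set.ncard_coe_finset, fv_card]
  · -- independent set {b k : 1 ≤ k ≤ i} ∪ {d}
    refine ⟨↑(((Finset.Icc 1 i).image JV.b) ∪ {JV.d}), ?_, ?_, ?_⟩
    · intro x hx
      simp only [Finset.coe_union, Set.mem_union, Finset.coe_image, Set.mem_image,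
        Finset.mem_coe, Finset.mem_Icc, Finset.coe_singleton, Set.mem_singleton_iff] at hx
      rcases hx with ⟨k, hk, rfl⟩ | rfl
      · exact hk
      · trivial
    · intro x hx y hy hadj
      simp only [Finset.coe_union, Set.mem_union, Finset.coe_image, Set.mem_image,
        Finset.mem_coe, Finset.mem_Icc, Finset.coe_singleton, Set.mem_singleton_iff] at hx hy
      rw [jadj] at hadj
      rcases hx with ⟨k, _, rfl⟩ | rfl <;> rcases hy with ⟨l, _, rfl⟩ | rfl <;>
        rcases hadj with ⟨hne, h | h⟩ <;> exact h
    · rw [Set.ncard_coe_finset, Finset.card_union_of_disjoint, Finset.card_image_of_injective,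
        Nat.card_Icc, Finset.card_singleton]
      · omega
      · intro x y h; exact (JV.b.injEq _ _).mp h
      · simp
  · -- upper bound
    intro t ht hind
    have htfin : t.Finite := by
      rw [jonesVerts_eq] at ht
      exact Set.Finite.subset (Finset.finite_toSet _) ht
    set s : Finset JV := htfin.toFinset with hs_def
    have hmem : ∀ x, x ∈ s ↔ x ∈ t := fun x => htfin.mem_toFinset
    have hsub : ∀ x ∈ s, x ∈ FV i := by
      intro x hx
      have := ht ((hmem x).mp hx)
      rwa [jonesVerts_eq, Finset.mem_coe] at this
    have hind' : ∀ x ∈ s, ∀ y ∈ s, ¬ JonesGraph.Adj x y := fun x hx y hy =>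
      hind x ((hmem x).mp hx) y ((hmem y).mp hy)
    rw [Set.ncard_eq_toFinset_card t htfin, ← hs_def]
    -- decompose s into blocks
    have hdecomp : s = (Finset.range (i+1)).biUnion (fun k => s ∩ Blk k) := by
      ext x
      simp only [Finset.mem_biUnion, Finset.mem_inter, Finset.mem_range]
      constructor
      · intro hx
        have := hsub x hx
        rw [FV, Finset.mem_biUnion] at this
        obtain ⟨k, hk, hbk⟩ := this
        exact ⟨k, Finset.mem_range.mp hk, hx, hbk⟩
      · rintro ⟨k, _, hx, _⟩; exact hx
    have hcard : s.card = ∑ k ∈ Finset.range (i+1), (s ∩ Blk k).card := by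
      conv_lhs => rw [hdecomp]
      exact Finset.card_biUnion (fun j _ k _ h =>
        Finset.disjoint_of_subset_left Finset.inter_subset_right
          (Finset.disjoint_of_subset_right Finset.inter_subset_right (blk_disjoint h)))
    rw [hcard]
    apply sum_bound
    · -- s ∩ Blk 0 has at most one element
      apply Finset.card_le_one.mpr
      intro x hx y hy
      simp only [Finset.mem_inter, Blk, Finset.mem_insert, Finset.mem_singleton] at hx hy
      obtain ⟨hxs, hx⟩ := hx; obtain ⟨hys, hy⟩ := hy
      rcases hx with rfl | rfl <;> rcases hy with rfl | rfl
      · rfl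
      · exact absurd adj_ed.symm (hind' _ hxs _ hys)
      · exact absurd adj_ed (hind' _ hxs _ hys)
      · rfl
    · -- each later block contributes at most 2
      intro k
      by_contra h
      push_neg at h
      have hsubB : s ∩ Blk (k+1) ⊆ Blk (k+1) := Finset.inter_subset_right
      have heq : s ∩ Blk (k+1) = Blk (k+1) := by
        apply Finset.eq_of_subset_of_card_le hsubB
        have : (Blk (k+1)).card = 3 := by simp [Blk]
        omega
      have ha : JV.a (k+1) ∈ s := (Finset.mem_inter.mp (heq ▸ (by simp [Blk] : JV.a (k+1) ∈ Blk (k+1)))).1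
      have hb : JV.b (k+1) ∈ s := (Finset.mem_inter.mp (heq ▸ (by simp [Blk] : JV.b (k+1) ∈ Blk (k+1)))).1
      exact hind' _ ha _ hb (adj_ab k)
    · -- if a block is "full" (2 elts), the previous block is empty
      intro k hk2
      -- first: b (k+1) ∉ s
      have hbnot : JV.b (k+1) ∉ s := by
        intro hb
        have hano : JV.a (k+1) ∉ s := fun ha => hind' _ ha _ hb (adj_ab k)
        have hcno : JV.c (k+1) ∉ s := fun hc => hind' _ hc _ hb (adj_cb k)
        have : s ∩ Blk (k+1) ⊆ {JV.b (k+1)} := by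
          intro x hx
          simp only [Finset.mem_inter, Blk, Finset.mem_insert, Finset.mem_singleton] at hx
          obtain ⟨hxs, hx⟩ := hx
          rcases hx with rfl | rfl | rfl
          · exact absurd hxs hano
          · simp
          · exact absurd hxs hcno
        have := Finset.card_le_card this
        simp at this
        omega
      have hsubac : s ∩ Blk (k+1) ⊆ {JV.a (k+1), JV.c (k+1)} := by
        intro x hx
        simp only [Finset.mem_inter, Blk, Finset.mem_insert, Finset.mem_singleton] at hx ⊢
        obtain ⟨hxs, hx⟩ := hx
        rcases hx with rfl | rfl | rfl
        · exact Or.inl rfl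
        · exact absurd hxs hbnot
        · exact Or.inr rfl
      have heq : s ∩ Blk (k+1) = {JV.a (k+1), JV.c (k+1)} := by
        apply Finset.eq_of_subset_of_card_le hsubac
        have : ({JV.a (k+1), JV.c (k+1)} : Finset JV).card = 2 := by
          rw [Finset.card_insert_of_notMem (by simp), Finset.card_singleton]
        omega
      have ha : JV.a (k+1) ∈ s := (Finset.mem_inter.mp (heq ▸ (by simp : JV.a (k+1) ∈ ({JV.a (k+1), JV.c (k+1)} : Finset JV)))).1
      have hc : JV.c (k+1) ∈ s := (Finset.mem_inter.mp (heq ▸ (by simp : JV.c (k+1) ∈ ({JV.a (k+1), JV.c (k+1)} : Finset JV)))).1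
      rw [Finset.card_eq_zero, Finset.eq_empty_iff_forall_notMem]
      intro x hx
      rw [Finset.mem_inter] at hx
      obtain ⟨hxs, hxB⟩ := hx
      match k, hxB with
      | 0, hxB =>
        simp only [Blk, Finset.mem_insert, Finset.mem_singleton] at hxB
        rcases hxB with rfl | rfl
        · exact hind' _ hxs _ hc adj_dc
        · exact hind' _ hxs _ ha adj_ea
      | (m+1), hxB =>
        simp only [Blk, Finset.mem_insert, Finset.mem_singleton] at hxB
        rcases hxB with rfl | rfl | rfl
        · exact hind' _ hxs _ hc (adj_ac m)
        · exact hind' _ hxs _ ha (adj_ba m)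
        · exact hind' _ hxs _ hc (adj_cc m)
  · -- arithmetic
    have h1 : (i : ℝ) + 1 ≠ 0 := by positivity
    have h2 : (3 * (i : ℝ) + 2) + 1 ≠ 0 := by positivity
    field_simp
    ring
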